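/- arXiv:1407.2508 — 2 statements merged into one kernel-verified Lean document; each statement's English description precedes it below -/
import Mathlib

section
/- Let S_n = ξ_1 + ... + ξ_n be a random walk whose i.i.d. steps satisfy P(ξ = j) = 1/(j(j+1)) for j ≥ 1, and let L(n) = max{k ≥ 0 : S_k ≤ n} be the last passage time below level n. Then (ln n / n) · L(n) → 1 in probability as n → ∞. -/
open MeasureTheory ProbabilityTheory Filter Finset
open scoped ENNReal Topology

/-!
Truncate the steps at level `n`: since `P(ξ > j) = 1/(j+1)`, the variables `min ξᵢ n` have
mean `H_n = 1 + 1/2 + ⋯ + 1/n ~ log n` and variance at most `2n`. By Chebyshev, after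
`k ≈ c n / log n` steps the truncated walk is `k H_n + O(√(kn)) = c n (1 + o(1))` with high
probability. For `c = 1 + ε` it already exceeds `n`, so `L(n) < k`. For `c = 1 - ε` it stays
below `n`; as one of the first `k` steps exceeds `n` only with probability at most
`k/(n+1) → 0`, the untruncated walk stays below `n` as well, so `L(n) ≥ k`.
-/

noncomputable def lastPassage (x : ℕ → ℕ) (n : ℕ) : ℕ := sSup {k | ∑ i ∈ range k, x i ≤ n}

lemma le_lastPassage_iff {x : ℕ → ℕ} (hx : ∀ i, 1 ≤ x i) {n k : ℕ} :
    k ≤ lastPassage x n ↔ ∑ i ∈ range k, x i ≤ n := by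
  have hle : ∀ m, m ≤ ∑ i ∈ range m, x i := fun m => by
    simpa using Finset.card_nsmul_le_sum (range m) x 1 fun i _ => hx i
  have hbdd : BddAbove {k | ∑ i ∈ range k, x i ≤ n} := ⟨n, fun m hm => (hle m).trans hm⟩
  refine ⟨fun hk => ?_, fun hk => le_csSup hbdd hk⟩
  exact (Finset.sum_le_sum_of_subset (range_subset_range.2 hk)).trans
    (Nat.sSup_mem ⟨0, by simp⟩ hbdd)

lemma hasSum_one_div_mul_add_one {m : ℝ} (hm : 0 < m) :
    HasSum (fun i : ℕ => 1 / ((m + i) * (m + i + 1))) (1 / m) := by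
  have hterm : ∀ i : ℕ, 1 / ((m + i) * (m + i + 1)) = 1 / (m + i) - 1 / (m + (i + 1 : ℕ)) := by
    intro i
    have : 0 < m + i := by positivity
    push_cast
    field_simp
    ring
  rw [hasSum_iff_tendsto_nat_of_nonneg (fun i => by positivity)]
  simp_rw [hterm, Finset.sum_range_sub']
  have h : Tendsto (fun N : ℕ => 1 / (m + N)) atTop (𝓝 0) :=
    tendsto_const_nhds.div_atTop (tendsto_atTop_add_const_left _ _ tendsto_natCast_atTop_atTop)
  simpa using (tendsto_const_nhds (x := 1 / m)).sub h

section Law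

variable {Ω : Type*} [MeasurableSpace Ω] {μ : Measure Ω} {X : Ω → ℕ} (hX : Measurable X)
  (hlaw : ∀ j : ℕ, 1 ≤ j → μ {ω | X ω = j} = ENNReal.ofReal (1 / ((j : ℝ) * ((j : ℝ) + 1))))
include hX hlaw

lemma measure_lt_of_law (n : ℕ) : μ {ω | n < X ω} = ENNReal.ofReal (1 / (n + 1)) := by
  have hset : {ω | n < X ω} = ⋃ i : ℕ, {ω | X ω = n + 1 + i} := by
    ext ω
    simp only [Set.mem_ofPred_eq, Set.mem_iUnion]
    exact ⟨fun h => ⟨X ω - (n + 1), by omega⟩, fun ⟨i, hi⟩ => by omega⟩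
  have hdisj : Pairwise (Function.onFun Disjoint fun i : ℕ => {ω | X ω = n + 1 + i}) :=
    fun i j hij => Set.disjoint_left.2 fun ω hi hj => hij (by simp_all)
  have hsum := hasSum_one_div_mul_add_one (m := (n : ℝ) + 1) (by positivity)
  rw [hset, measure_iUnion hdisj fun i => hX (measurableSet_singleton _)]
  simp_rw [hlaw _ (Nat.le_add_right_of_le (Nat.le_add_left 1 n))]
  push_cast
  rw [← ENNReal.ofReal_tsum_of_nonneg (fun i => by positivity) hsum.summable, hsum.tsum_eq]

lemma ae_one_le_of_law [IsProbabilityMeasure μ] : ∀ᵐ ω ∂μ, 1 ≤ X ω := by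
  have hpos : μ {ω | 0 < X ω} = 1 := by simpa using measure_lt_of_law hX hlaw 0
  rw [ae_iff]
  -- on `ℕ`, `¬ 1 ≤ X ω` is definitionally `X ω ∉ Set.Ioi 0`
  exact (prob_compl_eq_zero_iff (hX measurableSet_Ioi)).2 hpos

lemma integral_comp_min_of_law [IsProbabilityMeasure μ] (f : ℕ → ℝ) (n : ℕ) :
    ∫ ω, f (min (X ω) n) ∂μ = f 0 + ∑ j ∈ range n, (f (j + 1) - f j) / (j + 1) := by
  have hpoint : ∀ ω, f (min (X ω) n) =
      f 0 + ∑ j ∈ range n, {ω | j < X ω}.indicator (fun _ => f (j + 1) - f j) ω := fun ω => by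
    simp only [Set.indicator_apply, Set.mem_ofPred_eq]
    rw [← Finset.sum_filter,
      show (range n).filter (· < X ω) = range (min (X ω) n) by ext j; simp; omega,
      Finset.sum_range_sub]
    ring
  have hint : ∀ j : ℕ, Integrable ({ω | j < X ω}.indicator fun _ => f (j + 1) - f j) μ :=
    fun j => (integrable_const _).indicator (hX measurableSet_Ioi)
  simp_rw [hpoint]
  rw [integral_add (integrable_const _) (integrable_finsetSum _ fun j _ => hint j),
    integral_finsetSum _ fun j _ => hint j]
  simp only [integral_const, probReal_univ, one_smul]
  congr 1
  refine Finset.sum_congr rfl fun j _ => ?_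
  have hj : MeasurableSet {ω | j < X ω} := hX measurableSet_Ioi
  rw [integral_indicator_const _ hj,
    measureReal_def, measure_lt_of_law hX hlaw, ENNReal.toReal_ofReal (by positivity), smul_eq_mul]
  ring

lemma integral_min_of_law [IsProbabilityMeasure μ] (n : ℕ) :
    ∫ ω, ((min (X ω) n : ℕ) : ℝ) ∂μ = harmonic n := by
  rw [integral_comp_min_of_law hX hlaw (fun j => (j : ℝ))]
  simp [harmonic, Rat.cast_sum]

lemma integral_min_sq_le_of_law [IsProbabilityMeasure μ] (n : ℕ) :
    ∫ ω, ((min (X ω) n : ℕ) : ℝ) ^ 2 ∂μ ≤ 2 * n := by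
  rw [integral_comp_min_of_law hX hlaw (fun j => (j : ℝ) ^ 2)]
  calc _ ≤ ∑ _j ∈ range n, (2 : ℝ) := by
        rw [Nat.cast_zero, zero_pow two_ne_zero, zero_add]
        gcongr with j
        rw [div_le_iff₀ (by positivity)]
        push_cast
        nlinarith
    _ = 2 * n := by simp [mul_comm]

end Law

lemma tendsto_floor_mul_div_log_add_one_div {a : ℝ} (ha : 0 ≤ a) :
    Tendsto (fun n : ℕ => ((⌊a * n / Real.log n⌋₊ + 1 : ℕ) : ℝ) / n) atTop (𝓝 0) := by
  have hlog : Tendsto (fun n : ℕ => Real.log n) atTop atTop :=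
    Real.tendsto_log_atTop.comp tendsto_natCast_atTop_atTop
  have hbound : Tendsto (fun n : ℕ => a / Real.log n + 1 / n) atTop (𝓝 0) := by
    simpa using (tendsto_const_nhds.div_atTop hlog).add tendsto_one_div_atTop_nhds_zero_nat
  refine squeeze_zero' (Eventually.of_forall fun n => by positivity) ?_ hbound
  filter_upwards [eventually_ge_atTop 2] with n hn
  have hn' : (1 : ℝ) < n := by exact_mod_cast hn
  have hlogpos : 0 < Real.log n := Real.log_pos hn'
  calc ((⌊a * n / Real.log n⌋₊ + 1 : ℕ) : ℝ) / n ≤ (a * n / Real.log n + 1) / n := by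
        push_cast
        gcongr
        exact Nat.floor_le (by positivity)
    _ = a / Real.log n + 1 / n := by field_simp

lemma tendsto_log_div_natCast : Tendsto (fun n : ℕ => Real.log n / n) atTop (𝓝 0) := by
  simpa [Function.comp_def] using
    (Real.tendsto_pow_log_div_mul_add_atTop 1 0 1 one_ne_zero).comp tendsto_natCast_atTop_atTop

lemma log_le_harmonic (n : ℕ) : Real.log n ≤ harmonic n := by
  rcases Nat.eq_zero_or_pos n with rfl | hn
  · simp
  calc Real.log n ≤ Real.log (n + 1 : ℕ) := Real.log_le_log (by positivity) (by simp)
    _ ≤ harmonic n := log_add_one_le_harmonic n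

lemma floor_add_one_le_or_lt_ceil_of_lt_abs {a b ε δ : ℝ} (ha : 0 < a) (hb : 0 < b) (hε : 0 < ε)
    (hδ : δ ≤ ε) {m : ℕ} (h : ε < |a / b * m - 1|) :
    ⌊(1 + ε) * b / a⌋₊ + 1 ≤ m ∨ m < ⌈(1 - δ) * b / a⌉₊ := by
  have hm : a / b * m = a * m / b := div_mul_eq_mul_div a b m
  rcases lt_abs.1 h with h | h
  · have : (1 + ε) * b < a * m := by
      rw [hm, lt_sub_iff_add_lt, lt_div_iff₀ hb] at h
      linarith
    have : ⌊(1 + ε) * b / a⌋₊ < m :=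
      (Nat.floor_lt (by positivity)).2 ((div_lt_iff₀ ha).2 (by linarith))
    omega
  · have : a * m < (1 - δ) * b := by
      rw [hm, neg_sub, lt_sub_comm, div_lt_iff₀ hb] at h
      nlinarith
    exact Or.inr (Nat.lt_ceil.2 ((lt_div_iff₀ ha).2 (by linarith)))

section Walk

variable {Ω : Type*} [MeasurableSpace Ω] {μ : Measure Ω} [IsProbabilityMeasure μ]
  {ξ : ℕ → Ω → ℕ} (hmeas : ∀ i, Measurable (ξ i)) (hindep : iIndepFun ξ μ)
  (hlaw : ∀ i, ∀ j : ℕ, 1 ≤ j →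
    μ {ω | ξ i ω = j} = ENNReal.ofReal (1 / ((j : ℝ) * ((j : ℝ) + 1))))

include hmeas hindep hlaw

lemma measure_abs_sum_min_sub_ge_le {n : ℕ} (hn : 0 < n) (k : ℕ) {ε : ℝ} (hε : 0 < ε) :
    μ {ω | ε * n ≤ |∑ i ∈ range k, ((min (ξ i ω) n : ℕ) : ℝ) - k * harmonic n|}
      ≤ ENNReal.ofReal (2 / ε ^ 2 * (k / n)) := by
  have hn' : (0 : ℝ) < n := Nat.cast_pos.2 hn
  set Y : ℕ → Ω → ℝ := fun i => (fun m : ℕ => ((min m n : ℕ) : ℝ)) ∘ ξ i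
  have hYmeas : ∀ i, Measurable (Y i) := fun i => measurable_from_top.comp (hmeas i)
  have hY : ∀ i, MemLp (Y i) 2 μ := fun i =>
    MemLp.of_bound (hYmeas i).aestronglyMeasurable n <| ae_of_all _ fun ω => by
      simp only [Y, Function.comp_apply, Real.norm_eq_abs, Nat.abs_cast, Nat.cast_le]
      exact min_le_right _ _
  have hmean : μ[∑ i ∈ range k, Y i] = (k : ℝ) * (harmonic n : ℝ) := by
    simp only [Finset.sum_apply]
    rw [integral_finsetSum _ fun i _ => (hY i).integrable one_le_two]
    simp only [Y, Function.comp_apply, integral_min_of_law (hmeas _) (hlaw _), sum_const,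
      card_range, nsmul_eq_mul]
  have hvar : variance (∑ i ∈ range k, Y i) μ ≤ 2 * k * n := by
    rw [IndepFun.variance_sum (fun i _ => hY i) fun i _ j _ hij =>
      (hindep.indepFun hij).comp measurable_from_top measurable_from_top]
    calc ∑ i ∈ range k, variance (Y i) μ ≤ ∑ _i ∈ range k, 2 * (n : ℝ) := by
          gcongr with i
          exact (variance_le_expectation_sq (hYmeas i).aestronglyMeasurable).trans
            (integral_min_sq_le_of_law (hmeas i) (hlaw i) n)
      _ = 2 * k * n := by simp; ring
  calc _ = μ {ω | ε * n ≤ |(∑ i ∈ range k, Y i) ω - μ[∑ i ∈ range k, Y i]|} := by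
        rw [hmean]
        simp only [Finset.sum_apply, Y, Function.comp_apply]
    _ ≤ ENNReal.ofReal (variance (∑ i ∈ range k, Y i) μ / (ε * n) ^ 2) :=
        meas_ge_le_variance_div_sq (memLp_finsetSum' _ fun i _ => hY i) (by positivity)
    _ ≤ ENNReal.ofReal (2 * k * n / (ε * n) ^ 2) := by gcongr
    _ = ENNReal.ofReal (2 / ε ^ 2 * (k / n)) := by
        congr 1
        field_simp

lemma measure_le_lastPassage_le {n k : ℕ} (hn : 0 < n) {ε : ℝ} (hε : 0 < ε)
    (hk : (1 + ε) * n ≤ k * harmonic n) :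
    μ {ω | k ≤ lastPassage (fun i => ξ i ω) n} ≤ ENNReal.ofReal (2 / ε ^ 2 * (k / n)) := by
  have hpos : ∀ᵐ ω ∂μ, ∀ i, 1 ≤ ξ i ω := ae_all_iff.2 fun i => ae_one_le_of_law (hmeas i) (hlaw i)
  calc _ ≤ μ {ω | ε * n ≤ |∑ i ∈ range k, ((min (ξ i ω) n : ℕ) : ℝ) - k * harmonic n|} := by
        refine measure_mono_ae (hpos.mono fun ω hω (hkL : k ≤ _) => show ε * n ≤ _ from ?_)
        have hsum : ∑ i ∈ range k, ((min (ξ i ω) n : ℕ) : ℝ) ≤ n := by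
          exact_mod_cast (Finset.sum_le_sum fun i _ => min_le_left _ _).trans
            ((le_lastPassage_iff hω).1 hkL)
        rw [abs_sub_comm]
        exact le_abs.2 (Or.inl (by linarith))
    _ ≤ _ := measure_abs_sum_min_sub_ge_le hmeas hindep hlaw hn k hε

lemma measure_lastPassage_lt_le {n k : ℕ} (hn : 0 < n) {ε : ℝ} (hε : 0 < ε)
    (hk : k * harmonic n + ε * n ≤ n) :
    μ {ω | lastPassage (fun i => ξ i ω) n < k} ≤ ENNReal.ofReal ((1 + 2 / ε ^ 2) * (k / n)) := by
  have hpos : ∀ᵐ ω ∂μ, ∀ i, 1 ≤ ξ i ω := ae_all_iff.2 fun i => ae_one_le_of_law (hmeas i) (hlaw i)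
  have hn' : (0 : ℝ) < n := Nat.cast_pos.2 hn
  calc _ ≤ μ ((⋃ i ∈ range k, {ω | n < ξ i ω}) ∪
        {ω | ε * n ≤ |∑ i ∈ range k, ((min (ξ i ω) n : ℕ) : ℝ) - k * harmonic n|}) := by
        refine measure_mono_ae (hpos.mono fun ω hω (hLk : _ < k) => show _ ∨ _ from ?_)
        have hS : n < ∑ i ∈ range k, ξ i ω :=
          not_le.1 fun h => (not_le.2 hLk) ((le_lastPassage_iff hω).2 h)
        by_cases hjump : ∃ i ∈ range k, n < ξ i ω
        · obtain ⟨i, hi, hin⟩ := hjump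
          exact Or.inl (Set.mem_biUnion hi hin)
        · push Not at hjump
          have hsum : n < ∑ i ∈ range k, ((min (ξ i ω) n : ℕ) : ℝ) := by
            rw [Finset.sum_congr rfl fun i hi => congrArg Nat.cast (min_eq_left (hjump i hi))]
            exact_mod_cast hS
          exact Or.inr (show ε * n ≤ _ from le_abs.2 (Or.inl (by linarith)))
    _ ≤ ∑ i ∈ range k, μ {ω | n < ξ i ω} + ENNReal.ofReal (2 / ε ^ 2 * (k / n)) :=
        (measure_union_le _ _).trans (add_le_add (measure_biUnion_finset_le _ _)
          (measure_abs_sum_min_sub_ge_le hmeas hindep hlaw hn k hε))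
    _ ≤ ENNReal.ofReal (k / n) + ENNReal.ofReal (2 / ε ^ 2 * (k / n)) := by
        simp_rw [measure_lt_of_law (hmeas _) (hlaw _), Finset.sum_const, card_range, nsmul_eq_mul]
        rw [← ENNReal.ofReal_natCast, ← ENNReal.ofReal_mul (by positivity), mul_one_div]
        gcongr
        linarith
    _ = ENNReal.ofReal ((1 + 2 / ε ^ 2) * (k / n)) := by
        rw [← ENNReal.ofReal_add (by positivity) (by positivity)]
        congr 1
        ring

lemma tendsto_measure_floor_add_one_le_lastPassage {ε : ℝ} (hε : 0 < ε) :
    Tendsto (fun n : ℕ => μ {ω | ⌊(1 + ε) * n / Real.log n⌋₊ + 1 ≤ lastPassage (fun i => ξ i ω) n})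
      atTop (𝓝 0) := by
  have hbound := ENNReal.tendsto_ofReal
    ((tendsto_floor_mul_div_log_add_one_div (a := 1 + ε) (by positivity)).const_mul (2 / ε ^ 2))
  rw [mul_zero, ENNReal.ofReal_zero] at hbound
  refine tendsto_nhds_bot_mono hbound ?_
  filter_upwards [eventually_ge_atTop 2] with n hn
  have hlogpos : 0 < Real.log n := Real.log_pos (by exact_mod_cast hn)
  refine measure_le_lastPassage_le hmeas hindep hlaw (by omega) hε ?_
  calc (1 + ε) * n = (1 + ε) * n / Real.log n * Real.log n := by field_simp
    _ ≤ ((⌊(1 + ε) * n / Real.log n⌋₊ + 1 : ℕ) : ℝ) * Real.log n := by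
        gcongr
        exact (Nat.lt_floor_add_one _).le.trans_eq (by push_cast; rfl)
    _ ≤ _ := by gcongr; exact log_le_harmonic n

lemma tendsto_measure_lastPassage_lt_ceil {ε : ℝ} (hε : 0 < ε) (hε1 : ε ≤ 1) :
    Tendsto (fun n : ℕ => μ {ω | lastPassage (fun i => ξ i ω) n < ⌈(1 - ε) * n / Real.log n⌉₊})
      atTop (𝓝 0) := by
  set k : ℕ → ℕ := fun n => ⌈(1 - ε) * n / Real.log n⌉₊
  have hk : Tendsto (fun n => (k n : ℝ) / n) atTop (𝓝 0) := by
    refine squeeze_zero (fun n => by positivity) (fun n => ?_)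
      (tendsto_floor_mul_div_log_add_one_div (a := 1 - ε) (by linarith))
    gcongr
    exact_mod_cast Nat.ceil_le_floor_add_one _
  have hbound := ENNReal.tendsto_ofReal (hk.const_mul (1 + 2 / (ε / 2) ^ 2))
  rw [mul_zero, ENNReal.ofReal_zero] at hbound
  refine tendsto_nhds_bot_mono hbound ?_
  have hsum := tendsto_log_div_natCast.add hk
  rw [add_zero] at hsum
  have hsmall := hsum.eventually_lt_const (half_pos hε)
  filter_upwards [eventually_ge_atTop 2, hsmall] with n hn hsmall
  have hn' : (0 : ℝ) < n := by positivity
  have hlogpos : 0 < Real.log n := Real.log_pos (by exact_mod_cast hn)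
  refine measure_lastPassage_lt_le hmeas hindep hlaw (by omega) (half_pos hε) ?_
  have hkH : (k n : ℝ) * harmonic n ≤ k n + k n * Real.log n := by
    nlinarith [harmonic_le_one_add_log n, (Nat.cast_nonneg (k n) : (0 : ℝ) ≤ k n)]
  have hklog : (k n : ℝ) * Real.log n ≤ (1 - ε) * n + Real.log n := by
    have := Nat.ceil_lt_add_one (show 0 ≤ (1 - ε) * n / Real.log n by
      have : 0 ≤ 1 - ε := by linarith
      positivity)
    calc (k n : ℝ) * Real.log n ≤ ((1 - ε) * n / Real.log n + 1) * Real.log n := by gcongr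
      _ = (1 - ε) * n + Real.log n := by field_simp
  rw [← add_div, div_lt_iff₀ hn'] at hsmall
  show (k n : ℝ) * harmonic n + ε / 2 * n ≤ n
  linarith

end Walk

/-- **Last passage time asymptotics.** Let `S_k = ξ_1 + ... + ξ_k` be a random walk whose
i.i.d. steps satisfy `P(ξ = j) = 1/(j(j+1))` for `j ≥ 1`, and let
`L(n) = max{k ≥ 0 : S_k ≤ n}`. Then `(ln n / n) · L(n) → 1` in probability as `n → ∞`. -/
theorem lastPassage_ln_n_over_n_tendsto_one
    {Ω : Type*} [MeasurableSpace Ω] (μ : Measure Ω) [IsProbabilityMeasure μ]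
    (ξ : ℕ → Ω → ℕ) (hmeas : ∀ i, Measurable (ξ i))
    (hindep : iIndepFun ξ μ)
    (hlaw : ∀ i, ∀ j : ℕ, 1 ≤ j →
      μ {ω | ξ i ω = j} = ENNReal.ofReal (1 / ((j : ℝ) * ((j : ℝ) + 1))))
    (S : ℕ → Ω → ℕ) (hS : ∀ k ω, S k ω = ∑ i ∈ Finset.range k, ξ i ω)
    (L : ℕ → Ω → ℕ) (hL : ∀ n ω, L n ω = sSup {k : ℕ | S k ω ≤ n}) :
    ∀ ε : ℝ, 0 < ε →
      Tendsto (fun n : ℕ => μ {ω | |Real.log n / n * (L n ω : ℝ) - 1| > ε})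
        atTop (𝓝 0) := by
  intro ε hε
  have hL' : ∀ n ω, L n ω = lastPassage (fun i => ξ i ω) n := fun n ω => by
    simp only [hL, hS, lastPassage]
  have hsum := (tendsto_measure_floor_add_one_le_lastPassage hmeas hindep hlaw hε).add
    (tendsto_measure_lastPassage_lt_ceil hmeas hindep hlaw (lt_min hε one_pos) (min_le_right ε 1))
  rw [add_zero] at hsum
  refine tendsto_nhds_bot_mono hsum ?_
  filter_upwards [eventually_ge_atTop 2] with n hn
  have hlog : 0 < Real.log n := Real.log_pos (by exact_mod_cast hn)
  refine (measure_mono fun ω (hω : ε < _) => ?_).trans (measure_union_le _ _)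
  rw [hL'] at hω
  exact floor_add_one_le_or_lt_ceil_of_lt_abs hlog (by positivity) hε (min_le_left ε 1) hω
end

section
/- For a random recursive tree T_n on {0,1,...,n}, remove a uniformly random edge, splitting T_n into the subtree τ⁰ containing the root and the complementary subtree τ*. Then P(|τ*| = j) = (n+1)/(n j (j+1)) for j = 1, ..., n. -/
/-!
By independence, the attachment sequence together with the removed edge is uniform on the
`n! · n` pairs `(f, e)` with `f i ≤ i` and `1 ≤ e ≤ n`, so the probability is
`C n j / (n! · n)` with `C = totalCutCount`. When vertex `n + 1` is attached to `c`, the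
subtree below an old edge `e` grows by one exactly when `c` lies in it, while the new edge
`n + 1` cuts off a single vertex. This gives the urn recursion
`C (n+1) (k+1) = [k = 0] (n+1)! + k C n k + (n - k) C n (k+1)`,
and induction on `n` yields `C n j · j (j + 1) = n! (n + 1)`.
-/

open MeasureTheory ProbabilityTheory
open scoped ENNReal

/-- The parent map of a recursive tree on `{0,1,...}` determined by the attachment choices
`a`: vertex `i+1` is attached to vertex `a i ≤ i`, and `0` is the root. -/
def rrtParent {Ω : Type*} (a : ℕ → Ω → ℕ) (ω : Ω) : ℕ → ℕ
  | 0 => 0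
  | i + 1 => a i ω

open Finset
open scoped Nat

namespace RecursiveTree

section Descendants

open scoped Classical

variable {P Q : ℕ → ℕ} {n e v : ℕ}

noncomputable def descendants (P : ℕ → ℕ) (n e : ℕ) : Finset ℕ :=
  {v ∈ range (n + 1) | ∃ m, P^[m] v = e}

lemma mem_descendants : v ∈ descendants P n e ↔ v ≤ n ∧ ∃ m, P^[m] v = e := by
  simp [descendants]

lemma natCard_descendants :
    Nat.card {v | v ≤ n ∧ ∃ m, P^[m] v = e} = #(descendants P n e) := by
  rw [← Nat.card_eq_finsetCard]
  congr
  ext v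
  simp [mem_descendants]

lemma iterate_le (hP : ∀ v, P v ≤ v) (m v : ℕ) : P^[m] v ≤ v := by
  induction m generalizing v with
  | zero => rfl
  | succ m ih => exact (ih (P v)).trans (hP v)

lemma iterate_eq_of_eqOn (hQ : ∀ v, Q v ≤ v) (h : ∀ v ≤ n, P v = Q v) (m : ℕ) (hv : v ≤ n) :
    P^[m] v = Q^[m] v := by
  induction m generalizing v with
  | zero => rfl
  | succ m ih =>
    rw [Function.iterate_succ_apply, Function.iterate_succ_apply, h v hv]
    exact ih ((hQ v).trans hv)

lemma descendants_congr (hQ : ∀ v, Q v ≤ v) (h : ∀ v ≤ n, P v = Q v) :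
    descendants P n e = descendants Q n e := by
  ext v
  simp only [mem_descendants, and_congr_right_iff]
  intro hv
  simp only [iterate_eq_of_eqOn hQ h _ hv]

lemma descendants_subset_range : descendants P n e ⊆ range (n + 1) := filter_subset _ _

lemma descendants_self (hP : ∀ v, P v ≤ v) : descendants P n n = {n} := by
  ext v
  simp only [mem_descendants, mem_singleton]
  constructor
  · rintro ⟨hv, m, rfl⟩
    exact le_antisymm hv (iterate_le hP m v)
  · rintro rfl
    exact ⟨le_rfl, 0, rfl⟩

lemma exists_iterate_eq_iff_of_ne (hv : v ≠ e) :
    (∃ m, P^[m] v = e) ↔ ∃ m, P^[m] (P v) = e := by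
  constructor
  · rintro ⟨_ | m, hm⟩
    · exact absurd hm hv
    · exact ⟨m, hm⟩
  · rintro ⟨m, hm⟩
    exact ⟨m + 1, hm⟩

lemma card_descendants_succ (he : e ≤ n) (hc : P (n + 1) ≤ n) :
    #(descendants P (n + 1) e) =
      #(descendants P n e) + if P (n + 1) ∈ descendants P n e then 1 else 0 := by
  have hmem : (∃ m, P^[m] (n + 1) = e) ↔ P (n + 1) ∈ descendants P n e := by
    rw [exists_iterate_eq_iff_of_ne (by omega), mem_descendants, and_iff_right hc]
  rw [descendants, range_add_one, filter_insert, ← descendants]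
  split_ifs with h₁ h₂ h₂
  · rw [card_insert_of_notMem (by simp [mem_descendants])]
  · exact absurd (hmem.1 h₁) h₂
  · exact absurd (hmem.2 h₂) h₁
  · rfl

end Descendants

section AttachSeqs

variable {n : ℕ}

def attachSeqs (n : ℕ) : Finset (Fin n → ℕ) := Fintype.piFinset fun i => range (i + 1)

def attachParent (f : Fin n → ℕ) : ℕ → ℕ
  | 0 => 0
  | i + 1 => if h : i < n then f ⟨i, h⟩ else 0

lemma attachParent_le {f : Fin n → ℕ} (hf : f ∈ attachSeqs n) (v : ℕ) : attachParent f v ≤ v := by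
  rcases v with _ | i
  · rfl
  · simp only [attachParent]
    split_ifs with h
    · have := Fintype.mem_piFinset.1 hf ⟨i, h⟩
      simp only [mem_range] at this
      omega
    · omega

lemma attachParent_snoc_of_le (f : Fin n → ℕ) (c : ℕ) {v : ℕ} (hv : v ≤ n) :
    attachParent (Fin.snoc f c : Fin (n + 1) → ℕ) v = attachParent f v := by
  rcases v with _ | i
  · rfl
  · simp [attachParent, show i < n by omega, show i ≤ n by omega, Fin.snoc]

lemma attachParent_snoc_last (f : Fin n → ℕ) (c : ℕ) :
    attachParent (Fin.snoc f c : Fin (n + 1) → ℕ) (n + 1) = c := by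
  simp [attachParent, Fin.snoc]

lemma rrtParent_eq_attachParent {Ω : Type*} (a : ℕ → Ω → ℕ) (ω : Ω) {v : ℕ} (hv : v ≤ n) :
    rrtParent a ω v = attachParent (fun i : Fin n => a i ω) v := by
  rcases v with _ | i
  · rfl
  · simp [rrtParent, attachParent, show i < n by omega]

lemma card_attachSeqs (n : ℕ) : #(attachSeqs n) = n ! := by
  rw [attachSeqs, Fintype.card_piFinset, Fin.prod_univ_eq_prod_range (fun i => #(range (i + 1))),
    ← prod_range_add_one_eq_factorial]
  simp

lemma sum_attachSeqs_succ {M : Type*} [AddCommMonoid M] (F : (Fin (n + 1) → ℕ) → M) :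
    ∑ f ∈ attachSeqs (n + 1), F f = ∑ f ∈ attachSeqs n, ∑ c ∈ range (n + 1), F (Fin.snoc f c) := by
  have h := filter_piFinset_eq_map_snocEquiv (fun i : Fin (n + 1) => range (i + 1)) fun _ => True
  simp only [filter_true] at h
  rw [attachSeqs, h, sum_map, sum_product_right]
  rfl

lemma card_descendants_snoc {f : Fin n → ℕ} (hf : f ∈ attachSeqs n) {e c : ℕ} (he : e ≤ n)
    (hc : c ≤ n) :
    #(descendants (attachParent (Fin.snoc f c : Fin (n + 1) → ℕ)) (n + 1) e) =
      #(descendants (attachParent f) n e) +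
        if c ∈ descendants (attachParent f) n e then 1 else 0 := by
  have hagree := fun v (hv : v ≤ n) => attachParent_snoc_of_le f c hv
  rw [card_descendants_succ he (by rwa [attachParent_snoc_last]), attachParent_snoc_last,
    descendants_congr (attachParent_le hf) hagree]

lemma card_filter_card_add_ite_eq {α : Type*} [DecidableEq α] {s t : Finset α} (hts : t ⊆ s)
    (k : ℕ) :
    #{c ∈ s | #t + (if c ∈ t then 1 else 0) = k + 1} =
      (if #t = k then k else 0) + if #t = k + 1 then #s - (k + 1) else 0 := by
  by_cases hk : #t = k
  · have hfilter : {c ∈ s | #t + (if c ∈ t then 1 else 0) = k + 1} = t := by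
      ext c
      by_cases hc : c ∈ t
      · simp [hc, hk, hts hc]
      · simp [hc, hk]
    rw [hfilter, hk]
    simp
  by_cases hk' : #t = k + 1
  · have hfilter : {c ∈ s | #t + (if c ∈ t then 1 else 0) = k + 1} = s \ t := by
      ext c
      by_cases hc : c ∈ t <;> simp [hc, hk']
    rw [hfilter, card_sdiff_of_subset hts, hk']
    simp
  · rw [filter_false_of_mem fun c _ => by split_ifs <;> omega]
    simp [hk, hk']

end AttachSeqs

section Counting

noncomputable def cutCount (n e j : ℕ) : ℕ :=
  #{f ∈ attachSeqs n | #(descendants (attachParent f) n e) = j}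

noncomputable def totalCutCount (n j : ℕ) : ℕ := ∑ e ∈ Icc 1 n, cutCount n e j

lemma cutCount_self (n j : ℕ) : cutCount n n j = if j = 1 then n ! else 0 := by
  rw [cutCount, filter_congr fun f hf => by
    rw [descendants_self (attachParent_le hf), card_singleton]]
  split_ifs with hj <;> simp [hj, card_attachSeqs, eq_comm]

lemma cutCount_succ {n e : ℕ} (he : e ≤ n) (k : ℕ) :
    cutCount (n + 1) e (k + 1) = k * cutCount n e k + (n - k) * cutCount n e (k + 1) := by
  rw [cutCount, card_filter, sum_attachSeqs_succ]
  calc ∑ f ∈ attachSeqs n, ∑ c ∈ range (n + 1),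
        (if #(descendants (attachParent (Fin.snoc f c : Fin (n + 1) → ℕ)) (n + 1) e) = k + 1
          then 1 else 0)
      = ∑ f ∈ attachSeqs n, ((if #(descendants (attachParent f) n e) = k then k else 0) +
          if #(descendants (attachParent f) n e) = k + 1 then n - k else 0) := by
        refine sum_congr rfl fun f hf => ?_
        rw [← card_filter, filter_congr fun c hc => by
            rw [card_descendants_snoc hf he (by simpa [Nat.lt_succ_iff] using hc)],
          card_filter_card_add_ite_eq descendants_subset_range, card_range, Nat.add_sub_add_right]
    _ = k * cutCount n e k + (n - k) * cutCount n e (k + 1) := by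
        rw [sum_add_distrib, ← sum_filter, ← sum_filter, sum_const, sum_const, smul_eq_mul,
          smul_eq_mul, mul_comm, mul_comm (#_), cutCount, cutCount]

lemma totalCutCount_succ (n k : ℕ) :
    totalCutCount (n + 1) (k + 1) = (if k = 0 then (n + 1)! else 0) +
      (k * totalCutCount n k + (n - k) * totalCutCount n (k + 1)) := by
  rw [totalCutCount, ← insert_Icc_right_eq_Icc_add_one (by omega), sum_insert (by simp),
    cutCount_self, sum_congr rfl fun e he => cutCount_succ (mem_Icc.1 he).2 k, sum_add_distrib,
    ← mul_sum, ← mul_sum, totalCutCount, totalCutCount]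
  simp

lemma card_filter_product_eq_totalCutCount (n j : ℕ) :
    #{p ∈ attachSeqs n ×ˢ Icc 1 n | #(descendants (attachParent p.1) n p.2) = j} =
      totalCutCount n j := by
  rw [card_filter, sum_product_right, totalCutCount]
  exact sum_congr rfl fun e _ => (card_filter _ _).symm

lemma totalCutCount_mul {n j : ℕ} (hj : 1 ≤ j) (hjn : j ≤ n) :
    totalCutCount n j * (j * (j + 1)) = n ! * (n + 1) := by
  induction n generalizing j with
  | zero => omega
  | succ n ih =>
    obtain ⟨k, rfl⟩ : ∃ k, j = k + 1 := ⟨j - 1, by omega⟩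
    rw [totalCutCount_succ]
    rcases Nat.eq_zero_or_pos k with rfl | hk
    · have hone : n * totalCutCount n 1 * 2 = n * (n ! * (n + 1)) := by
        rcases Nat.eq_zero_or_pos n with rfl | hn
        · rfl
        · rw [mul_assoc, ← ih le_rfl hn]
      simp only [if_true, zero_mul, zero_add, Nat.sub_zero, Nat.factorial_succ] at hone ⊢
      linear_combination hone
    · obtain ⟨d, rfl⟩ : ∃ d, n = k + d := ⟨n - k, by omega⟩
      have hsmall := ih hk (by omega)
      have hlarge : d * (totalCutCount (k + d) (k + 1) * ((k + 1) * (k + 2))) =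
          d * ((k + d)! * (k + d + 1)) := by
        rcases Nat.eq_zero_or_pos d with rfl | hd
        · simp
        · rw [ih (by omega) (by omega)]
      rw [if_neg hk.ne', zero_add, Nat.factorial_succ, Nat.add_sub_cancel_left]
      linear_combination (k + 2) * hsmall + hlarge

end Counting

section Probability

variable {Ω : Type*} [MeasurableSpace Ω] {μ : Measure Ω} {n : ℕ} {a : ℕ → Ω → ℕ} {E : Ω → ℕ}

def rrtSample (n : ℕ) (a : ℕ → Ω → ℕ) (E : Ω → ℕ) (ω : Ω) : (Fin n → ℕ) × ℕ :=
  (fun i => a i ω, E ω)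

lemma measurable_rrtSample (hameas : ∀ i, Measurable (a i)) (hEmeas : Measurable E) :
    Measurable (rrtSample n a E) :=
  (measurable_pi_lambda (fun ω (i : Fin n) => a i ω) fun i => hameas i).prodMk hEmeas

lemma measure_rrtSample_preimage_singleton
    (hindep : iIndepFun (Sum.elim a (fun _ : Unit => E) : ℕ ⊕ Unit → Ω → ℕ) μ)
    (halaw : ∀ i, i < n → ∀ j ≤ i, μ {ω | a i ω = j} = ((i : ℝ≥0∞) + 1)⁻¹)
    (hElaw : ∀ j, 1 ≤ j → j ≤ n → μ {ω | E ω = j} = ((n : ℝ≥0∞))⁻¹)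
    {f : Fin n → ℕ} (hf : f ∈ attachSeqs n) {e : ℕ} (he : e ∈ Icc 1 n) :
    μ (rrtSample n a E ⁻¹' {(f, e)}) = ((n ! * n : ℕ) : ℝ≥0∞)⁻¹ := by
  let g : Option (Fin n) → ℕ ⊕ Unit := fun k => k.elim (Sum.inr ()) fun i => Sum.inl i
  have hg : g.Injective := by
    rintro (_ | i) (_ | i') h <;> simp_all [g, Fin.val_inj]
  let sets : Option (Fin n) → Set ℕ := fun k => k.elim {e} fun i => {f i}
  have h := (hindep.precomp hg).measure_inter_preimage_eq_mul univ (sets := sets) (by simp)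
  have hpre : rrtSample n a E ⁻¹' {(f, e)} =
      ⋂ k ∈ univ, Sum.elim a (fun _ : Unit => E) (g k) ⁻¹' sets k := by
    ext ω
    simp [rrtSample, Prod.ext_iff, funext_iff, Option.forall, g, sets, and_comm]
  rw [hpre, h, Fintype.prod_option]
  simp only [g, sets, Option.elim_none, Option.elim_some, Sum.elim_inl, Sum.elim_inr]
  have hE : μ (E ⁻¹' {e}) = (n : ℝ≥0∞)⁻¹ := hElaw e (mem_Icc.1 he).1 (mem_Icc.1 he).2
  have ha (i : Fin n) : μ (a i ⁻¹' {f i}) = ((i : ℝ≥0∞) + 1)⁻¹ :=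
    halaw i i.2 (f i) (Nat.lt_succ_iff.1 (mem_range.1 (Fintype.mem_piFinset.1 hf i)))
  have hfact : ∏ i : Fin n, ((i : ℝ≥0∞) + 1) = n ! := by
    rw [Fin.prod_univ_eq_prod_range (fun i => (i : ℝ≥0∞) + 1), ← prod_range_add_one_eq_factorial]
    push_cast
    rfl
  rw [hE, Fintype.prod_congr _ _ ha, ← ENNReal.prod_inv_distrib fun _ _ _ _ _ => by simp, hfact,
    Nat.cast_mul, ENNReal.mul_inv (by simp) (by simp), mul_comm]

lemma measure_rrtSample_preimage (hameas : ∀ i, Measurable (a i)) (hEmeas : Measurable E)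
    (hindep : iIndepFun (Sum.elim a (fun _ : Unit => E) : ℕ ⊕ Unit → Ω → ℕ) μ)
    (halaw : ∀ i, i < n → ∀ j ≤ i, μ {ω | a i ω = j} = ((i : ℝ≥0∞) + 1)⁻¹)
    (hElaw : ∀ j, 1 ≤ j → j ≤ n → μ {ω | E ω = j} = ((n : ℝ≥0∞))⁻¹)
    {S : Finset ((Fin n → ℕ) × ℕ)} (hS : S ⊆ attachSeqs n ×ˢ Icc 1 n) :
    μ (rrtSample n a E ⁻¹' S) = #S * ((n ! * n : ℕ) : ℝ≥0∞)⁻¹ := by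
  rw [← sum_measure_preimage_singleton S fun p _ =>
      measurable_rrtSample hameas hEmeas (measurableSet_singleton p),
    sum_congr rfl fun p hp => measure_rrtSample_preimage_singleton hindep halaw hElaw
      (mem_product.1 (hS hp)).1 (mem_product.1 (hS hp)).2,
    sum_const, nsmul_eq_mul]

lemma ae_rrtSample_mem [IsProbabilityMeasure μ] (hn : 0 < n)
    (hameas : ∀ i, Measurable (a i)) (hEmeas : Measurable E)
    (hindep : iIndepFun (Sum.elim a (fun _ : Unit => E) : ℕ ⊕ Unit → Ω → ℕ) μ)
    (halaw : ∀ i, i < n → ∀ j ≤ i, μ {ω | a i ω = j} = ((i : ℝ≥0∞) + 1)⁻¹)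
    (hElaw : ∀ j, 1 ≤ j → j ≤ n → μ {ω | E ω = j} = ((n : ℝ≥0∞))⁻¹) :
    ∀ᵐ ω ∂μ, rrtSample n a E ω ∈ attachSeqs n ×ˢ Icc 1 n := by
  have hcard : #(attachSeqs n ×ˢ Icc 1 n) = n ! * n := by
    rw [card_product, card_attachSeqs, Nat.card_Icc, Nat.add_sub_cancel]
  have hmass := measure_rrtSample_preimage hameas hEmeas hindep halaw hElaw subset_rfl
  rw [hcard, ENNReal.mul_inv_cancel (by positivity) (ENNReal.natCast_ne_top _)] at hmass
  exact ae_iff.2 ((prob_compl_eq_zero_iff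
    (measurable_rrtSample hameas hEmeas (Finset.measurableSet _))).2 hmass)

end Probability

end RecursiveTree

open RecursiveTree in
/-- Edges are labelled by their outer endpoints, so removing edge `E` cuts off the descendants
of `E`. -/
theorem rrt_cut_subtree_size_general
    {Ω : Type*} [MeasurableSpace Ω] (μ : Measure Ω) [IsProbabilityMeasure μ]
    (n : ℕ)
    (a : ℕ → Ω → ℕ) (E : Ω → ℕ)
    (hameas : ∀ i, Measurable (a i)) (hEmeas : Measurable E)
    (hindep : iIndepFun
      (Sum.elim a (fun _ : Unit => E) : ℕ ⊕ Unit → Ω → ℕ) μ)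
    (halaw : ∀ i, i < n → ∀ j ≤ i, μ {ω | a i ω = j} = ((i : ℝ≥0∞) + 1)⁻¹)
    (hElaw : ∀ j, 1 ≤ j → j ≤ n → μ {ω | E ω = j} = ((n : ℝ≥0∞))⁻¹) :
    ∀ j : ℕ, 1 ≤ j → j ≤ n →
      μ {ω | Nat.card {v : ℕ | v ≤ n ∧ ∃ m : ℕ, (rrtParent a ω)^[m] v = E ω} = j}
        = ENNReal.ofReal (((n : ℝ) + 1) / ((n : ℝ) * (j : ℝ) * ((j : ℝ) + 1))) := by
  intro j hj hjn
  have hn : 0 < n := by omega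
  set S := {p ∈ attachSeqs n ×ˢ Icc 1 n | #(descendants (attachParent p.1) n p.2) = j}
  have hevent : {ω | Nat.card {v : ℕ | v ≤ n ∧ ∃ m : ℕ, (rrtParent a ω)^[m] v = E ω} = j}
      =ᵐ[μ] rrtSample n a E ⁻¹' S := by
    rw [Filter.eventuallyEq_set]
    filter_upwards [ae_rrtSample_mem hn hameas hEmeas hindep halaw hElaw] with ω hω
    have hf := (mem_product.1 hω).1
    rw [natCard_descendants, descendants_congr (attachParent_le hf)
      fun v hv => rrtParent_eq_attachParent a ω hv]
    rw [Set.mem_preimage, mem_coe, mem_filter, and_iff_right hω]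
    rfl
  have hT : (totalCutCount n j : ℝ) * (j * (j + 1)) = n ! * (n + 1) := by
    exact_mod_cast totalCutCount_mul hj hjn
  rw [measure_congr hevent, measure_rrtSample_preimage hameas hEmeas hindep halaw hElaw
    (filter_subset _ _), card_filter_product_eq_totalCutCount, ← ENNReal.ofReal_natCast,
    ← ENNReal.ofReal_natCast (n ! * n), ← ENNReal.ofReal_inv_of_pos (by positivity),
    ← ENNReal.ofReal_mul (by positivity)]
  congr 1
  field_simp
  push_cast
  linear_combination (n : ℝ) * hT

/-- **Law of the size of the cut subtree (Meir–Moon).** For a random recursive tree `T_n` on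
`{0,1,...,n}` (vertex `i+1` attached to a uniform vertex of `{0,…,i}`, independently), remove
a uniformly random edge `E ∈ {1,…,n}` (edges being labeled by their outer endpoints),
splitting `T_n` into the root component and the complementary subtree `τ*` consisting of the
vertices whose path to `0` passes through the removed edge. Then
`P(|τ*| = j) = (n+1)/(n j (j+1))` for `j = 1, ..., n`. -/
theorem rrt_cut_subtree_size
    {Ω : Type*} [MeasurableSpace Ω] (μ : Measure Ω) [IsProbabilityMeasure μ]
    (n : ℕ) (hn : 1 ≤ n)
    (a : ℕ → Ω → ℕ) (E : Ω → ℕ)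
    (hameas : ∀ i, Measurable (a i)) (hEmeas : Measurable E)
    (hadom : ∀ i ω, a i ω ≤ i)
    (hindep : iIndepFun
      (Sum.elim a (fun _ : Unit => E) : ℕ ⊕ Unit → Ω → ℕ) μ)
    (halaw : ∀ i, i < n → ∀ j ≤ i, μ {ω | a i ω = j} = ((i : ℝ≥0∞) + 1)⁻¹)
    (hElaw : ∀ j, 1 ≤ j → j ≤ n → μ {ω | E ω = j} = ((n : ℝ≥0∞))⁻¹) :
    ∀ j : ℕ, 1 ≤ j → j ≤ n →
      μ {ω | Nat.card {v : ℕ | v ≤ n ∧ ∃ m : ℕ, (rrtParent a ω)^[m] v = E ω} = j}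
        = ENNReal.ofReal (((n : ℝ) + 1) / ((n : ℝ) * (j : ℝ) * ((j : ℝ) + 1))) :=
  rrt_cut_subtree_size_general μ n a E hameas hEmeas hindep halaw hElaw
end
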